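/- arXiv:1901.09527 — 3 statements merged into one kernel-verified Lean document; each statement's English description precedes it below -/
import Mathlib

section
/- Let G = (X ⊔ Y, E) be a finite bipartite graph with partitions X = X_S ⊔ X_L and Y = Y_S ⊔ Y_L satisfying: (a) there are no edges between X_S and Y_L; (b) G[X_S, Y_S] is Y-path-saturated; (c) G[X_L, Y_L] admits a matching saturating X_L. Then every envy-free matching in G is contained in G[X_L, Y_L]; that is, every edge of an envy-free matching has one endpoint in X_L and the other in Y_L. -/
/-!
Let `W` be envy-free and let `T` be the set of vertices of `Y_S` saturated by `W`. Every
`X_S`-neighbour of `T` envies `W` unless it is itself saturated, and by (a) the `W`-partners of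
saturated vertices of `X_S` lie in `T`; so the `X_S`-neighbourhood of `T` has at most `|T|`
vertices. A `Y`-path-saturated graph has strict surplus on its `Y`-side: the perfect matchings
`X_i ≅ Y_i` give `|T ∩ Y_i| ≤ |N(T) ∩ X_i|`, and if `i` is the first level met by `T`, the
level `X_{i-1}` contributes a further vertex of `N(T)`. Hence `T = ∅`, and then (a) forces every
edge of `W` into `G[X_L, Y_L]`.
-/

attribute [local instance] Classical.propDecidable

variable {V : Type*}

/-- `X, Y` form a bipartition of the vertex set of the simple graph `G`:
they are disjoint, cover all vertices, and every edge joins `X` to `Y`. -/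
def IsBipartition [Fintype V] (G : SimpleGraph V) (X Y : Finset V) : Prop :=
  Disjoint X Y ∧ X ∪ Y = Finset.univ ∧
    ∀ ⦃u v : V⦄, G.Adj u v → (u ∈ X ∧ v ∈ Y) ∨ (u ∈ Y ∧ v ∈ X)

/-- `M` is a matching of `G` all of whose edges go from `X'` to `Y'`
(i.e. a matching of the induced subgraph `G[X', Y']`), recorded as a set of
pairwise vertex-disjoint adjacent pairs. -/
def IsBipMatching (G : SimpleGraph V) (X' Y' : Finset V) (M : Finset (V × V)) : Prop :=
  (∀ p ∈ M, p.1 ∈ X' ∧ p.2 ∈ Y' ∧ G.Adj p.1 p.2) ∧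
  ∀ p ∈ M, ∀ q ∈ M, p ≠ q → p.1 ≠ q.1 ∧ p.2 ≠ q.2

/-- `M` is envy-free w.r.t. `X`: no unmatched vertex of `X` is adjacent to a
matched vertex on the `Y`-side of `M`. -/
def EnvyFree (G : SimpleGraph V) (X : Finset V) (M : Finset (V × V)) : Prop :=
  ∀ x ∈ X, x ∉ M.image Prod.fst → ∀ y ∈ M.image Prod.snd, ¬ G.Adj x y

/-- The (bipartite) graph `G[X ∪ Y]` is `Y`-path-saturated: for some `k ≥ 1` there are
partitions `X = X_0 ⊔ ⋯ ⊔ X_k` and `Y = Y_1 ⊔ ⋯ ⊔ Y_k` such that for `1 ≤ i ≤ k`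
there is a perfect matching between `X_i` and `Y_i`, and every vertex of `Y_i` is
adjacent to some vertex of `X_{i-1}`. -/
def YPathSaturated (G : SimpleGraph V) (X Y : Finset V) : Prop :=
  ∃ k : ℕ, 1 ≤ k ∧ ∃ A B : ℕ → Finset V,
    (∀ i ∈ Finset.range (k + 1), ∀ j ∈ Finset.range (k + 1), i ≠ j → Disjoint (A i) (A j)) ∧
    (∀ i ∈ Finset.Icc 1 k, ∀ j ∈ Finset.Icc 1 k, i ≠ j → Disjoint (B i) (B j)) ∧
    X = (Finset.range (k + 1)).biUnion A ∧
    Y = (Finset.Icc 1 k).biUnion B ∧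
    (∀ i ∈ Finset.Icc 1 k, ∃ f : V → V,
      Set.BijOn f (A i) (B i) ∧ ∀ x ∈ A i, G.Adj x (f x)) ∧
    (∀ i ∈ Finset.Icc 1 k, ∀ y ∈ B i, ∃ x ∈ A (i - 1), G.Adj x y)

open Finset

lemma card_inter_le_card_inter_of_surjOn {α β : Type*} [DecidableEq α] [DecidableEq β]
    {f : α → β} {A S : Finset α} {B T : Finset β} (hf : Set.SurjOn f A B)
    (hS : ∀ x ∈ A, f x ∈ T → x ∈ S) : (T ∩ B).card ≤ (S ∩ A).card := by
  refine card_le_card_of_surjOn f fun y hy => ?_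
  obtain ⟨hyT, hyB⟩ := mem_inter.1 hy
  obtain ⟨x, hxA, rfl⟩ := hf hyB
  exact ⟨x, mem_inter.2 ⟨hS x hxA hyT, hxA⟩, rfl⟩

lemma sum_lt_sum_of_subset_of_le {ι : Type*} [DecidableEq ι] {t s : ι → ℕ} {I J : Finset ι}
    {j₀ : ι} (hIJ : I ⊆ J) (hts : ∀ j ∈ I, t j ≤ s j) (hj₀ : j₀ ∈ J) (ht : j₀ ∈ I → t j₀ = 0) (hs : 0 < s j₀) :
    ∑ j ∈ I, t j < ∑ j ∈ J, s j := by
  calc ∑ j ∈ I, t j ≤ ∑ j ∈ I, Function.update s j₀ 0 j := sum_le_sum fun j hj => by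
        rcases eq_or_ne j j₀ with rfl | hne
        · simp [ht hj]
        · simpa [Function.update_of_ne hne] using hts j hj
    _ ≤ ∑ j ∈ J, Function.update s j₀ 0 j := sum_le_sum_of_subset hIJ
    _ < ∑ j ∈ J, s j := by
      refine sum_lt_sum (fun j _ => ?_) ⟨j₀, hj₀, by simpa using hs⟩
      rcases eq_or_ne j j₀ with rfl | hne <;> simp [*]

theorem YPathSaturated.card_lt_of_neighbors_subset {G : SimpleGraph V} {X Y S T : Finset V}
    (hG : YPathSaturated G X Y) (hTY : T ⊆ Y) (hT : T.Nonempty)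
    (hS : ∀ x ∈ X, ∀ y ∈ T, G.Adj x y → x ∈ S) : T.card < S.card := by
  obtain ⟨k, -, A, B, hA, -, rfl, rfl, hmatch, hprev⟩ := hG
  have hIcc : Icc 1 k ⊆ range (k + 1) := fun j hj => by
    rw [mem_Icc] at hj; rw [mem_range]; omega
  have hlevel : ∃ i, i ∈ Icc 1 k ∧ (T ∩ B i).Nonempty := by
    obtain ⟨y, hy⟩ := hT
    obtain ⟨i, hi, hyi⟩ := mem_biUnion.1 (hTY hy)
    exact ⟨i, hi, y, mem_inter.2 ⟨hy, hyi⟩⟩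
  obtain ⟨hi, y, hy⟩ := Nat.find_spec hlevel
  set i := Nat.find hlevel
  have hi_bounds := mem_Icc.1 hi
  have hprev_mem : i - 1 ∈ range (k + 1) := mem_range.2 (by omega)
  have hprev_pos : 0 < (S ∩ A (i - 1)).card := by
    obtain ⟨x, hx, hxy⟩ := hprev i hi y (mem_inter.1 hy).2
    have hxX := mem_biUnion.2 ⟨_, hprev_mem, hx⟩
    exact card_pos.2 ⟨x, mem_inter.2 ⟨hS x hxX y (mem_inter.1 hy).1 hxy, hx⟩⟩
  calc T.card ≤ ((Icc 1 k).biUnion fun j => T ∩ B j).card := card_le_card fun y hy => by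
        obtain ⟨j, hj, hyj⟩ := mem_biUnion.1 (hTY hy)
        exact mem_biUnion.2 ⟨j, hj, mem_inter.2 ⟨hy, hyj⟩⟩
    _ ≤ ∑ j ∈ Icc 1 k, (T ∩ B j).card := card_biUnion_le
    _ < ∑ j ∈ range (k + 1), (S ∩ A j).card := by
      refine sum_lt_sum_of_subset_of_le hIcc (fun j hj => ?_) hprev_mem (fun hj => ?_) hprev_pos
      · obtain ⟨f, hf, hadj⟩ := hmatch j hj
        exact card_inter_le_card_inter_of_surjOn hf.surjOn fun x hx hfx =>
          hS x (mem_biUnion.2 ⟨j, hIcc hj, hx⟩) _ hfx (hadj x hx)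
      · refine card_eq_zero.2 (not_nonempty_iff_eq_empty.1 fun hne => ?_)
        have := Nat.find_min' hlevel ⟨hj, hne⟩
        omega
    _ = ((range (k + 1)).biUnion fun j => S ∩ A j).card :=
      (card_biUnion fun i hi j hj hij =>
        (hA i hi j hj hij).mono inter_subset_right inter_subset_right).symm
    _ ≤ S.card := card_le_card (biUnion_subset.2 fun _ _ => inter_subset_left)

lemma IsBipMatching.card_inter_image_fst_le {G : SimpleGraph V}
    {X Y XS YS : Finset V} {W : Finset (V × V)} (hW : IsBipMatching G X Y W)
    (hXS : ∀ p ∈ W, p.1 ∈ XS → p.2 ∈ YS) :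
    (XS ∩ W.image Prod.fst).card ≤ (YS ∩ W.image Prod.snd).card := by
  set W' := W.filter fun p => p.1 ∈ XS
  have hsnd : Set.InjOn Prod.snd (W' : Set (V × V)) := fun p hp q hq hpq => by
    by_contra hne
    exact (hW.2 p (mem_filter.1 hp).1 q (mem_filter.1 hq).1 hne).2 hpq
  calc (XS ∩ W.image Prod.fst).card ≤ (W'.image Prod.fst).card := card_le_card fun x hx => by
        obtain ⟨hxXS, hxW⟩ := mem_inter.1 hx
        obtain ⟨p, hp, rfl⟩ := mem_image.1 hxW
        exact mem_image_of_mem _ (mem_filter.2 ⟨hp, hxXS⟩)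
    _ ≤ W'.card := card_image_le
    _ = (W'.image Prod.snd).card := (card_image_of_injOn hsnd).symm
    _ ≤ (YS ∩ W.image Prod.snd).card := card_le_card fun y hy => by
        obtain ⟨p, hp, rfl⟩ := mem_image.1 hy
        obtain ⟨hpW, hpXS⟩ := mem_filter.1 hp
        exact mem_inter.2 ⟨hXS p hpW hpXS, mem_image_of_mem _ hpW⟩

lemma EnvyFree.mem_image_fst_of_adj {G : SimpleGraph V} {X : Finset V} {W : Finset (V × V)}
    (hW : EnvyFree G X W) {x y : V} (hx : x ∈ X) (hy : y ∈ W.image Prod.snd) (hxy : G.Adj x y) :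
    x ∈ W.image Prod.fst := by
  by_contra hnot
  exact hW x hx hnot y hy hxy

theorem envy_free_contained_general (G : SimpleGraph V) (X Y : Finset V)
    (XS XL YS YL : Finset V)
    (hXunion : XS ∪ XL = X) (hYunion : YS ∪ YL = Y)
    (ha : ∀ x ∈ XS, ∀ y ∈ YL, ¬ G.Adj x y)
    (hb : YPathSaturated G XS YS) :
    ∀ W : Finset (V × V), IsBipMatching G X Y W → EnvyFree G X W →
      ∀ p ∈ W, p.1 ∈ XL ∧ p.2 ∈ YL := by
  intro W hW hEF
  have hto_YS : ∀ p ∈ W, p.1 ∈ XS → p.2 ∈ YS := fun p hp hpXS => by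
    obtain ⟨-, hpY, hadj⟩ := hW.1 p hp
    rcases mem_union.1 (hYunion ▸ hpY) with h | h
    · exact h
    · exact absurd hadj (ha _ hpXS _ h)
  have hYS_unmatched : YS ∩ W.image Prod.snd = ∅ := by
    refine not_nonempty_iff_eq_empty.1 fun hne => ?_
    refine (hb.card_lt_of_neighbors_subset inter_subset_left hne fun x hx y hy hxy => ?_).not_ge
      (hW.card_inter_image_fst_le hto_YS)
    exact mem_inter.2 ⟨hx, hEF.mem_image_fst_of_adj (hXunion ▸ mem_union_left _ hx)
      (mem_inter.1 hy).2 hxy⟩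
  intro p hp
  obtain ⟨hpX, hpY, hadj⟩ := hW.1 p hp
  have hpYL : p.2 ∈ YL := (mem_union.1 (hYunion ▸ hpY)).resolve_left fun h =>
    (eq_empty_iff_forall_notMem.1 hYS_unmatched) _ (mem_inter.2 ⟨h, mem_image_of_mem _ hp⟩)
  exact ⟨(mem_union.1 (hXunion ▸ hpX)).resolve_left fun h => ha _ h _ hpYL hadj, hpYL⟩

/-- under conditions (a), (b), (c), every envy-free matching in `G` is
contained in `G[X_L, Y_L]`: each of its edges has one endpoint in `X_L` and the other
in `Y_L`. -/
theorem envy_free_contained [Fintype V] (G : SimpleGraph V) (X Y : Finset V)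
    (hBip : IsBipartition G X Y)
    (XS XL YS YL : Finset V)
    (hXdisj : Disjoint XS XL) (hXunion : XS ∪ XL = X)
    (hYdisj : Disjoint YS YL) (hYunion : YS ∪ YL = Y)
    (ha : ∀ x ∈ XS, ∀ y ∈ YL, ¬ G.Adj x y)
    (hb : YPathSaturated G XS YS)
    (hc : ∃ M : Finset (V × V), IsBipMatching G XL YL M ∧ XL ⊆ M.image Prod.fst) :
    ∀ W : Finset (V × V), IsBipMatching G X Y W → EnvyFree G X W →
      ∀ p ∈ W, p.1 ∈ XL ∧ p.2 ∈ YL :=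
  envy_free_contained_general G X Y XS XL YS YL hXunion hYunion ha hb
end

section
/- If a finite bipartite graph G = (X ⊔ Y, E) satisfies |N_G(X)| ≥ |X| ≥ 1, then G admits a nonempty envy-free matching. -/
attribute [local instance] Classical.propDecidable

variable {V : Type*}

/-!
If Hall's condition holds on `X`, a matching saturating `X` exists and is trivially envy-free.
Otherwise take a Hall violator `S`, `|N(S)| < |S|`, and discard `S` together with `N(S)`. Since
`|N(X)| ≥ |X|`, the set `X \ S` is nonempty and keeps at least `|X \ S|` neighbours outside
`N(S)`, so by induction it has a nonempty envy-free matching avoiding `N(S)`; the vertices of `S`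
are adjacent only to `N(S)`, so they envy nobody in it.
-/

noncomputable def SimpleGraph.neighborsIn (G : SimpleGraph V) (S Y : Finset V) : Finset V :=
  Y.filter fun y => ∃ x ∈ S, G.Adj x y

namespace SimpleGraph

variable {G : SimpleGraph V}

lemma mem_neighborsIn {S Y : Finset V} {y : V} :
    y ∈ G.neighborsIn S Y ↔ y ∈ Y ∧ ∃ x ∈ S, G.Adj x y :=
  Finset.mem_filter

lemma neighborsIn_subset_union (S X Y : Finset V) :
    G.neighborsIn X Y ⊆ G.neighborsIn (X \ S) (Y \ G.neighborsIn S Y) ∪ G.neighborsIn S Y := by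
  intro y hy
  obtain ⟨hyY, x, hxX, hxy⟩ := mem_neighborsIn.1 hy
  by_cases hyS : y ∈ G.neighborsIn S Y
  · exact Finset.mem_union_right _ hyS
  · have hxS : x ∉ S := fun hxS => hyS (mem_neighborsIn.2 ⟨hyY, x, hxS, hxy⟩)
    exact Finset.mem_union_left _ <| mem_neighborsIn.2
      ⟨Finset.mem_sdiff.2 ⟨hyY, hyS⟩, x, Finset.mem_sdiff.2 ⟨hxX, hxS⟩, hxy⟩

end SimpleGraph

open SimpleGraph

variable {G : SimpleGraph V} {X Y X' Y' : Finset V} {M : Finset (V × V)}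

lemma IsBipMatching.mono (hM : IsBipMatching G X' Y' M) (hX : X' ⊆ X) (hY : Y' ⊆ Y) :
    IsBipMatching G X Y M := by
  refine ⟨fun p hp => ?_, hM.2⟩
  obtain ⟨hpX, hpY, hadj⟩ := hM.1 p hp
  exact ⟨hX hpX, hY hpY, hadj⟩

lemma envyFree_of_image_fst_eq (hM : M.image Prod.fst = X) : EnvyFree G X M :=
  fun _ hx hxM => absurd (hM ▸ hx) hxM

lemma exists_isBipMatching_image_fst_eq
    (hall : ∀ S ⊆ X, S.card ≤ (G.neighborsIn S Y).card) :
    ∃ M, IsBipMatching G X Y M ∧ M.image Prod.fst = X := by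
  have hall' : ∀ s : Finset X,
      s.card ≤ (s.biUnion fun x => G.neighborsIn {x.1} Y).card := by
    intro s
    have hunion : (s.biUnion fun x => G.neighborsIn {x.1} Y) =
        G.neighborsIn (s.map (Function.Embedding.subtype _)) Y := by
      ext y
      simp only [Finset.mem_biUnion, mem_neighborsIn, Finset.mem_singleton, Finset.mem_map,
        Function.Embedding.coe_subtype]
      aesop
    rw [hunion, ← Finset.card_map (Function.Embedding.subtype _)]
    exact hall _ fun x hx => by
      obtain ⟨x, -, rfl⟩ := Finset.mem_map.1 hx
      exact x.2
  obtain ⟨f, hf_inj, hf⟩ := (Finset.all_card_le_biUnion_card_iff_exists_injective _).1 hall'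
  have hfY (x : X) : f x ∈ Y ∧ G.Adj x (f x) := by
    simpa [mem_neighborsIn] using hf x
  refine ⟨X.attach.image fun x => (x.1, f x), ⟨?_, ?_⟩, ?_⟩
  · simp only [Finset.mem_image, Finset.mem_attach, true_and, forall_exists_index]
    rintro _ x rfl
    exact ⟨x.2, hfY x⟩
  · simp only [Finset.mem_image, Finset.mem_attach, true_and]
    rintro _ ⟨x, rfl⟩ _ ⟨x', rfl⟩ hne
    have hxx' : x ≠ x' := fun h => hne (h ▸ rfl)
    exact ⟨fun h => hxx' (Subtype.ext h), fun h => hxx' (hf_inj h)⟩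
  · ext x
    simp

lemma EnvyFree.of_sdiff (S : Finset V)
    (hM : IsBipMatching G (X \ S) (Y \ G.neighborsIn S Y) M) (hEF : EnvyFree G (X \ S) M) :
    EnvyFree G X M := by
  intro x hx hxM y hy hxy
  by_cases hxS : x ∈ S
  · obtain ⟨p, hp, rfl⟩ := Finset.mem_image.1 hy
    obtain ⟨hpY, hpS⟩ := Finset.mem_sdiff.1 (hM.1 p hp).2.1
    exact hpS (mem_neighborsIn.2 ⟨hpY, x, hxS, hxy⟩)
  · exact hEF x (Finset.mem_sdiff.2 ⟨hx, hxS⟩) hxM y hy hxy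

lemma exists_envyFree_of_card_le_card_neighborsIn (hX : X.Nonempty)
    (hN : X.card ≤ (G.neighborsIn X Y).card) :
    ∃ M, IsBipMatching G X Y M ∧ M.Nonempty ∧ EnvyFree G X M := by
  induction X using Finset.strongInduction generalizing Y with
  | H X ih =>
  by_cases hall : ∀ S ⊆ X, S.card ≤ (G.neighborsIn S Y).card
  · obtain ⟨M, hM, hMX⟩ := exists_isBipMatching_image_fst_eq hall
    refine ⟨M, hM, ?_, envyFree_of_image_fst_eq hMX⟩
    rw [← hMX] at hX
    exact Finset.image_nonempty.1 hX
  push Not at hall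
  obtain ⟨S, hSX, hS⟩ := hall
  have hSne : S.Nonempty := Finset.card_pos.1 (by omega)
  have hSX' : S ⊂ X := Finset.ssubset_iff_subset_ne.2 ⟨hSX, by rintro rfl; omega⟩
  have hcard : (X \ S).card = X.card - S.card := Finset.card_sdiff_of_subset hSX
  have hlt : S.card < X.card := Finset.card_lt_card hSX'
  have hsplit := (Finset.card_le_card (G.neighborsIn_subset_union S X Y)).trans
    (Finset.card_union_le _ _)
  obtain ⟨M, hM, hMne, hEF⟩ := ih (X \ S) (Finset.sdiff_ssubset hSX hSne)
    (Y := Y \ G.neighborsIn S Y) (Finset.card_pos.1 (by omega)) (by omega)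
  exact ⟨M, hM.mono Finset.sdiff_subset Finset.sdiff_subset, hMne, hEF.of_sdiff S hM⟩

lemma IsBipartition.filter_adj_eq_neighborsIn [Fintype V] (hG : IsBipartition G X Y) :
    (Finset.univ.filter fun y => ∃ x ∈ X, G.Adj x y) = G.neighborsIn X Y := by
  ext y
  simp only [Finset.mem_filter, Finset.mem_univ, true_and, mem_neighborsIn]
  refine ⟨fun ⟨x, hx, hxy⟩ => ⟨?_, x, hx, hxy⟩, And.right⟩
  rcases hG.2.2 hxy with ⟨-, hy⟩ | ⟨hxY, -⟩
  · exact hy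
  · exact absurd hxY (Finset.disjoint_left.1 hG.1 hx)

/-- if `|N_G(X)| ≥ |X| ≥ 1` then `G` admits a nonempty envy-free
matching. -/
theorem nonempty_envy_free_of_card_le [Fintype V]
    (G : SimpleGraph V) (X Y : Finset V) (hBip : IsBipartition G X Y)
    (hX : 1 ≤ X.card)
    (hN : X.card ≤ (Finset.univ.filter fun y => ∃ x ∈ X, G.Adj x y).card) :
    ∃ M : Finset (V × V), IsBipMatching G X Y M ∧ M.Nonempty ∧ EnvyFree G X M := by
  rw [hBip.filter_adj_eq_neighborsIn] at hN
  exact exists_envyFree_of_card_le_card_neighborsIn (Finset.card_pos.1 hX) hN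
end

section
/- If a finite bipartite graph G = (X ⊔ Y, E) is Y-path-saturated, then the only envy-free matching in G is the empty matching. -/
/-!
Let `S ⊆ X` and `T ⊆ Y` be the vertices saturated by an envy-free matching, so `#S = #T`.
On each layer `i ≥ 1` the perfect matching `X_i → Y_i` sends unsaturated vertices to
unsaturated ones (envy-freeness), hence `#(Y_i ∩ T) ≤ #(X_i ∩ S)`. Summing over the layers and
using `#S = #T` forces `X_0 ∩ S = ∅` and equality on every layer. Now induct upwards: if
`X_{i-1} ∩ S = ∅`, every vertex of `Y_i` has an unsaturated neighbour, so `Y_i ∩ T = ∅`, and by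
the equality `X_i ∩ S = ∅`. Hence `S = ∅`.
-/

attribute [local instance] Classical.propDecidable

variable {V : Type*}

open Finset

theorem Finset.card_eq_sum_card_inter_of_subset_biUnion {ι α : Type*} [DecidableEq α]
    {s : Finset ι} {A : ι → Finset α} {S : Finset α} (hA : (s : Set ι).PairwiseDisjoint A)
    (hS : S ⊆ s.biUnion A) : #S = ∑ i ∈ s, #(A i ∩ S) := by
  rw [← card_biUnion (hA.mono fun _ => inter_subset_left), ← biUnion_inter,
    inter_eq_right.mpr hS]

theorem Set.BijOn.card_inter_le_card_inter {α β : Type*} [DecidableEq α] [DecidableEq β]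
    {f : α → β} {A S : Finset α} {B T : Finset β} (hf : Set.BijOn f A B)
    (hST : ∀ x ∈ A, f x ∈ T → x ∈ S) : #(B ∩ T) ≤ #(A ∩ S) := by
  have hsdiff : #(A \ S) ≤ #(B \ T) :=
    card_le_card_of_injOn f
      (fun x hx => by
        simp only [coe_sdiff, Set.mem_sdiff, mem_coe] at hx ⊢
        exact ⟨hf.mapsTo hx.1, fun h => hx.2 (hST x hx.1 h)⟩)
      (hf.injOn.mono (by simp))
  have := hf.finsetCard_eq
  have := card_sdiff_add_card_inter A S
  have := card_sdiff_add_card_inter B T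
  omega

theorem Nat.range_succ_eq_insert_Icc_one (k : ℕ) : range (k + 1) = insert 0 (Icc 1 k) := by
  rw [Nat.range_succ_eq_Icc_zero, ← insert_Icc_succ_left_eq_Icc (Nat.zero_le k)]
  rfl

theorem Finset.inter_eq_empty_of_layers {α β : Type*} [DecidableEq α] [DecidableEq β] {k : ℕ}
    {A : ℕ → Finset α} {B : ℕ → Finset β} {S : Finset α} {T : Finset β}
    (hlayer : ∀ i ∈ Icc 1 k, #(B i ∩ T) ≤ #(A i ∩ S))
    (hcard : ∑ i ∈ range (k + 1), #(A i ∩ S) ≤ ∑ i ∈ Icc 1 k, #(B i ∩ T))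
    (hstep : ∀ i ∈ Icc 1 k, A (i - 1) ∩ S = ∅ → B i ∩ T = ∅) :
    ∀ i ≤ k, A i ∩ S = ∅ := by
  rw [Nat.range_succ_eq_insert_Icc_one, sum_insert (by simp)] at hcard
  have hsum := sum_le_sum hlayer
  have hA0 : A 0 ∩ S = ∅ := card_eq_zero.mp (by omega)
  have heq := (sum_eq_sum_iff_of_le hlayer).mp (by omega)
  intro i hi
  induction i with
  | zero => exact hA0
  | succ i ih =>
    have hi' : i + 1 ∈ Icc 1 k := mem_Icc.mpr ⟨by omega, hi⟩
    have hlast := heq (i + 1) hi'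
    rw [hstep (i + 1) hi' (ih (by omega)), card_empty] at hlast
    exact card_eq_zero.mp hlast.symm

namespace IsBipMatching

variable {G : SimpleGraph V} {X Y : Finset V} {M : Finset (V × V)}

theorem card_image_fst (hM : IsBipMatching G X Y M) : #(M.image Prod.fst) = #M :=
  card_image_of_injOn fun p hp q hq h => by_contra fun hpq => (hM.2 p hp q hq hpq).1 h

theorem card_image_snd (hM : IsBipMatching G X Y M) : #(M.image Prod.snd) = #M :=
  card_image_of_injOn fun p hp q hq h => by_contra fun hpq => (hM.2 p hp q hq hpq).2 h

theorem image_fst_subset (hM : IsBipMatching G X Y M) : M.image Prod.fst ⊆ X := by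
  simpa [image_subset_iff] using fun p hp => (hM.1 p hp).1

theorem image_snd_subset (hM : IsBipMatching G X Y M) : M.image Prod.snd ⊆ Y := by
  simpa [image_subset_iff] using fun p hp => (hM.1 p hp).2.1

end IsBipMatching

namespace EnvyFree

variable {G : SimpleGraph V} {X : Finset V} {M : Finset (V × V)}

theorem mem_image_fst_of_adj_s7 (hM : EnvyFree G X M) {x y : V} (hx : x ∈ X)
    (hy : y ∈ M.image Prod.snd) (hxy : G.Adj x y) : x ∈ M.image Prod.fst :=
  by_contra fun h => hM x hx h y hy hxy

theorem card_inter_image_snd_le (hM : EnvyFree G X M) {A B : Finset V} {f : V → V}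
    (hAX : A ⊆ X) (hf : Set.BijOn f A B) (hadj : ∀ x ∈ A, G.Adj x (f x)) :
    #(B ∩ M.image Prod.snd) ≤ #(A ∩ M.image Prod.fst) :=
  hf.card_inter_le_card_inter fun x hx hfx => hM.mem_image_fst_of_adj_s7 (hAX hx) hfx (hadj x hx)

theorem inter_image_snd_eq_empty (hM : EnvyFree G X M) {A B : Finset V} (hAX : A ⊆ X)
    (hA : A ∩ M.image Prod.fst = ∅) (hB : ∀ y ∈ B, ∃ x ∈ A, G.Adj x y) :
    B ∩ M.image Prod.snd = ∅ := by
  refine eq_empty_of_forall_notMem fun y hy => ?_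
  obtain ⟨hyB, hyT⟩ := mem_inter.mp hy
  obtain ⟨x, hx, hxy⟩ := hB y hyB
  exact notMem_empty x (hA ▸ mem_inter.mpr ⟨hx, hM.mem_image_fst_of_adj_s7 (hAX hx) hyT hxy⟩)

end EnvyFree

theorem envy_free_empty_of_path_saturated_general
    (G : SimpleGraph V) (X Y : Finset V)
    (hYPS : YPathSaturated G X Y) :
    ∀ M : Finset (V × V), IsBipMatching G X Y M → EnvyFree G X M → M = ∅ := by
  obtain ⟨k, -, A, B, hAdisj, hBdisj, hX, hY, hPM, hAdjY⟩ := hYPS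
  intro M hM hEF
  have hXA : ∀ i ≤ k, A i ⊆ X := fun i hi =>
    hX ▸ subset_biUnion_of_mem A (mem_range.mpr (Nat.lt_succ_of_le hi))
  have hlayer : ∀ i ∈ Icc 1 k, #(B i ∩ M.image Prod.snd) ≤ #(A i ∩ M.image Prod.fst) := by
    intro i hi
    obtain ⟨f, hf, hadj⟩ := hPM i hi
    exact hEF.card_inter_image_snd_le (hXA i (mem_Icc.mp hi).2) hf hadj
  have hcard : ∑ i ∈ range (k + 1), #(A i ∩ M.image Prod.fst) ≤
      ∑ i ∈ Icc 1 k, #(B i ∩ M.image Prod.snd) := by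
    rw [← card_eq_sum_card_inter_of_subset_biUnion hAdisj (hX ▸ hM.image_fst_subset),
      ← card_eq_sum_card_inter_of_subset_biUnion hBdisj (hY ▸ hM.image_snd_subset),
      hM.card_image_fst, hM.card_image_snd]
  have hempty := inter_eq_empty_of_layers hlayer hcard fun i hi hprev =>
    hEF.inter_image_snd_eq_empty (hXA (i - 1) ((i.sub_le 1).trans (mem_Icc.mp hi).2)) hprev
      (hAdjY i hi)
  rw [← image_eq_empty (f := Prod.fst), ← inter_eq_right.mpr hM.image_fst_subset, hX,
    biUnion_inter, ← subset_empty, biUnion_subset]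
  exact fun i hi => (hempty i (Nat.lt_succ_iff.mp (mem_range.mp hi))).subset

/-- in a `Y`-path-saturated finite bipartite graph, the only envy-free
matching is the empty matching. -/
theorem envy_free_empty_of_path_saturated [Fintype V]
    (G : SimpleGraph V) (X Y : Finset V) (hBip : IsBipartition G X Y)
    (hYPS : YPathSaturated G X Y) :
    ∀ M : Finset (V × V), IsBipMatching G X Y M → EnvyFree G X M → M = ∅ :=
  envy_free_empty_of_path_saturated_general G X Y hYPS
end
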